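/- Let V_1, …, V_{n+1} be exchangeable real-valued random variables and let α ∈ (0,1). Then P( V_{n+1} ≤ Quantile(α; {V_1, …, V_n} ∪ {+∞}) ) ≥ ⌈α(n+1)⌉ / (n+1), which is at least α. -/

import Mathlib

open MeasureTheory ProbabilityTheory

/-- The empirical `α`-quantile of a finite multiset `S` of values in `ℝ ∪ {+∞}`:
the `⌈α · |S|⌉`-th smallest element of `S`, counted with multiplicity. -/
noncomputable def empQuantile (α : ℝ) (S : Multiset (WithTop ℝ)) : WithTop ℝ :=
  (S.sort (· ≤ ·)).getD (⌈α * (S.card : ℝ)⌉.toNat - 1) ⊤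

/-- Random variables `Z 0, …, Z (m-1)` are exchangeable if their joint distribution is
invariant under every permutation of the indices. -/
def Exchangeable {Ω α : Type*} [MeasurableSpace Ω] [MeasurableSpace α]
    (P : Measure Ω) {m : ℕ} (Z : Fin m → Ω → α) : Prop :=
  ∀ σ : Equiv.Perm (Fin m),
    Measure.map (fun ω i => Z (σ i) ω) P = Measure.map (fun ω i => Z i ω) P

/-!
`V (last n)` lies below the quantile exactly when fewer than `k = ⌈α (n + 1)⌉` of the other
scores are strictly smaller than it, i.e. when its rank among all `n + 1` scores is below `k`.
In every realisation at least `k` of the `n + 1` indices have rank below `k`, and by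
exchangeability every index does so with the same probability; averaging gives
`(n + 1) · P (rank of V (last n) < k) ≥ k`.
-/

open Finset
open scoped ENNReal

theorem List.Pairwise.le_getElem_iff_countP_lt_le {β : Type*} [LinearOrder β] {l : List β}
    (hl : l.Pairwise (· ≤ ·)) (v : β) {k : ℕ} (hk : k < l.length) :
    v ≤ l[k] ↔ l.countP (· < v) ≤ k := by
  induction l generalizing k with
  | nil => simp at hk
  | cons a l ih =>
    obtain ⟨ha, hl⟩ := List.pairwise_cons.1 hl
    by_cases hav : a < v
    · cases k with
      | zero => simp [hav, not_le.2 hav]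
      | succ k =>
        simpa [List.countP_cons, hav] using ih hl (by simpa using hk)
    · have hva : v ≤ a := not_lt.1 hav
      have hcount : (a :: l).countP (· < v) = 0 :=
        List.countP_eq_zero.2 fun x hx => by
          simpa using hva.trans (List.forall_mem_cons.2 ⟨le_rfl, ha⟩ x hx)
      simp only [hcount, zero_le, iff_true]
      exact hva.trans (List.forall_mem_cons.2 ⟨le_rfl, ha⟩ _ (List.getElem_mem hk))

theorem le_empQuantile_iff {α : ℝ} (hα : 0 < α) {S : Multiset (WithTop ℝ)} (hS : S ≠ 0)
    (v : WithTop ℝ) :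
    v ≤ empQuantile α S ↔ S.countP (· < v) < ⌈α * S.card⌉₊ := by
  have hk : 1 ≤ ⌈α * S.card⌉₊ :=
    Nat.one_le_iff_ne_zero.2 <| by
      simpa using mul_pos hα (Nat.cast_pos.2 (Multiset.card_pos.2 hS))
  have hcountP : (S.sort (· ≤ ·)).countP (· < v) = S.countP (· < v) := by
    conv_rhs => rw [← Multiset.sort_eq S (· ≤ ·)]
    rw [Multiset.coe_countP]
  rw [empQuantile, Int.ceil_toNat]
  by_cases hlen : ⌈α * S.card⌉₊ - 1 < (S.sort (· ≤ ·)).length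
  · rw [List.getD_eq_getElem _ _ hlen,
      (Multiset.pairwise_sort S _).le_getElem_iff_countP_lt_le v hlen, hcountP]
    omega
  · rw [List.getD_eq_default _ _ (not_lt.1 hlen)]
    simp only [le_top, true_iff]
    rw [Multiset.length_sort] at hlen
    have := Multiset.countP_le_card (· < v) S
    omega

theorem countP_lt_cons_top_map_coe {ι : Type*} [Fintype ι] (w : ι → ℝ) (v : ℝ) :
    ((⊤ : WithTop ℝ) ::ₘ univ.val.map fun i => (w i : WithTop ℝ)).countP (· < (v : WithTop ℝ)) =
      #{i | w i < v} := by
  simp [Multiset.countP_map, Finset.card, Finset.filter_val]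

theorem coe_le_empQuantile_cons_top_iff {α : ℝ} (hα : 0 < α) {ι : Type*} [Fintype ι]
    (w : ι → ℝ) (v : ℝ) :
    (v : WithTop ℝ) ≤ empQuantile α (⊤ ::ₘ univ.val.map fun i => (w i : WithTop ℝ)) ↔
      #{i | w i < v} < ⌈α * (Fintype.card ι + 1)⌉₊ := by
  rw [le_empQuantile_iff hα Multiset.cons_ne_zero, countP_lt_cons_top_map_coe]
  simp

section Rank

variable {ι β : Type*} [Fintype ι] [LinearOrder β]

def rank (x : ι → β) (j : ι) : ℕ := #{i | x i < x j}

theorem rank_comp_perm (x : ι → β) (σ : Equiv.Perm ι) (j : ι) :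
    rank (fun i => x (σ i)) j = rank x (σ j) :=
  card_equiv σ (by simp)

theorem rank_last {n : ℕ} (x : Fin (n + 1) → β) :
    rank x (Fin.last n) = #{i : Fin n | x i.castSucc < x (Fin.last n)} := by
  rw [rank, card_filter, card_filter, Fin.sum_univ_castSucc]
  simp

theorem le_card_rank_lt (x : ι → β) {k : ℕ} (hk : k ≤ Fintype.card ι) :
    k ≤ #{j | rank x j < k} := by
  by_cases hhigh : ({j | k ≤ rank x j} : Finset ι).Nonempty
  · -- every value strictly below a smallest high-ranked value is low-ranked
    obtain ⟨j₀, hj₀, hmin⟩ := exists_min_image _ x hhigh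
    calc k ≤ rank x j₀ := (mem_filter.1 hj₀).2
      _ ≤ #{j | rank x j < k} := card_le_card fun i hi => by
        simp only [mem_filter, mem_univ, true_and] at hi ⊢
        by_contra! hik
        exact (hmin i (by simpa using hik)).not_gt hi
  · rw [not_nonempty_iff_eq_empty, filter_eq_empty_iff] at hhigh
    simpa [filter_true_of_mem fun j _ => not_le.1 (hhigh (mem_univ j))] using hk

theorem measurableSet_rank_lt [TopologicalSpace β] [MeasurableSpace β] [OpensMeasurableSpace β]
    [OrderClosedTopology β] [SecondCountableTopology β] (j : ι) (k : ℕ) :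
    MeasurableSet {x : ι → β | rank x j < k} := by
  have : Measurable fun x : ι → β => rank x j := by
    simp_rw [rank, card_filter]
    exact Finset.measurable_sum _ fun i _ => Measurable.ite
      (measurableSet_lt (measurable_pi_apply i) (measurable_pi_apply j))
      measurable_const measurable_const
  exact this measurableSet_Iio

end Rank

open Classical in
theorem le_sum_measure_of_le_card_mem {Ω ι : Type*} [MeasurableSpace Ω] [Fintype ι]
    {P : Measure Ω} [IsProbabilityMeasure P] {A : ι → Set Ω} (hA : ∀ i, MeasurableSet (A i))
    {k : ℕ} (hk : ∀ ω, k ≤ #{i | ω ∈ A i}) :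
    (k : ℝ≥0∞) ≤ ∑ i, P (A i) :=
  calc (k : ℝ≥0∞) = ∫⁻ _, (k : ℝ≥0∞) ∂P := by simp
    _ ≤ ∫⁻ ω, ∑ i, (A i).indicator 1 ω ∂P := lintegral_mono fun ω => by
      simpa [Set.indicator_apply, sum_boole] using hk ω
    _ = ∑ i, P (A i) := by
      rw [lintegral_finsetSum _ fun i _ => measurable_one.indicator (hA i)]
      simp_rw [lintegral_indicator_one (hA _)]

namespace Exchangeable

variable {Ω α : Type*} [MeasurableSpace Ω] [MeasurableSpace α] {P : Measure Ω} {m : ℕ}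
  {Z : Fin m → Ω → α}

theorem measure_perm_mem (hZ : Exchangeable P Z) (hmeas : ∀ i, Measurable (Z i))
    (σ : Equiv.Perm (Fin m)) {T : Set (Fin m → α)} (hT : MeasurableSet T) :
    P {ω | (fun i => Z (σ i) ω) ∈ T} = P {ω | (fun i => Z i ω) ∈ T} := by
  have hmeasσ : Measurable fun ω i => Z (σ i) ω := measurable_pi_lambda _ fun i => hmeas (σ i)
  change P ((fun ω i => Z (σ i) ω) ⁻¹' T) = P ((fun ω i => Z i ω) ⁻¹' T)
  rw [← Measure.map_apply hmeasσ hT, hZ σ, Measure.map_apply (measurable_pi_lambda _ hmeas) hT]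

variable [TopologicalSpace α] [LinearOrder α] [OpensMeasurableSpace α] [OrderClosedTopology α]
  [SecondCountableTopology α]

theorem measure_rank_lt_eq (hZ : Exchangeable P Z) (hmeas : ∀ i, Measurable (Z i)) (k : ℕ)
    (j j' : Fin m) :
    P {ω | rank (fun i => Z i ω) j < k} = P {ω | rank (fun i => Z i ω) j' < k} := by
  have hswap (ω : Ω) : rank (fun i => Z (Equiv.swap j' j i) ω) j' = rank (fun i => Z i ω) j := by
    rw [rank_comp_perm (fun i => Z i ω), Equiv.swap_apply_left]
  simpa only [Set.mem_ofPred_eq, hswap] using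
    hZ.measure_perm_mem hmeas (Equiv.swap j' j) (measurableSet_rank_lt j' k)

theorem card_le_mul_measure_rank_lt [IsProbabilityMeasure P] (hZ : Exchangeable P Z)
    (hmeas : ∀ i, Measurable (Z i)) {k : ℕ} (hk : k ≤ m) (j : Fin m) :
    (k : ℝ≥0∞) ≤ m * P {ω | rank (fun i => Z i ω) j < k} :=
  calc (k : ℝ≥0∞) ≤ ∑ j', P {ω | rank (fun i => Z i ω) j' < k} :=
        le_sum_measure_of_le_card_mem
          (fun j' => measurable_pi_lambda _ hmeas (measurableSet_rank_lt j' k))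
          fun ω => by simpa using le_card_rank_lt (fun i => Z i ω) (by simpa using hk)
    _ = m * P {ω | rank (fun i => Z i ω) j < k} := by
        simp [hZ.measure_rank_lt_eq hmeas k _ j]

end Exchangeable

/-- If `V 0, …, V n` are exchangeable real random variables and `α ∈ (0,1)`, then
`P(V_{n+1} ≤ Quantile(α; {V_1, …, V_n} ∪ {+∞})) ≥ ⌈α(n+1)⌉/(n+1) ≥ α`. -/
theorem conformal_quantile_coverage_sharp
    {Ω : Type*} [MeasurableSpace Ω] (P : Measure Ω) [IsProbabilityMeasure P]
    {n : ℕ} (V : Fin (n + 1) → Ω → ℝ) (hVmeas : ∀ i, Measurable (V i))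
    (hexch : Exchangeable P V)
    (α : ℝ) (hα : α ∈ Set.Ioo (0 : ℝ) 1) :
    ENNReal.ofReal ((⌈α * ((n : ℝ) + 1)⌉ : ℝ) / ((n : ℝ) + 1)) ≤
      P {ω | ((V (Fin.last n) ω : ℝ) : WithTop ℝ) ≤
        empQuantile α
          ((⊤ : WithTop ℝ) ::ₘ
            ((Finset.univ : Finset (Fin n)).val.map
              fun i => ((V i.castSucc ω : ℝ) : WithTop ℝ)))} ∧
    α ≤ (⌈α * ((n : ℝ) + 1)⌉ : ℝ) / ((n : ℝ) + 1) := by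
  obtain ⟨hα0, hα1⟩ := hα
  have hn : (0 : ℝ) < n + 1 := by positivity
  set k := ⌈α * ((n : ℝ) + 1)⌉₊
  have hceil : ((⌈α * ((n : ℝ) + 1)⌉ : ℤ) : ℝ) = k := by
    rw [← Int.natCast_ceil_eq_ceil (by positivity), Int.cast_natCast]
  have hk : k ≤ n + 1 := Nat.ceil_le.2 (by push_cast; nlinarith)
  have hcover := hexch.card_le_mul_measure_rank_lt hVmeas hk (Fin.last n)
  simp_rw [rank_last] at hcover
  simp_rw [coe_le_empQuantile_cons_top_iff hα0, Fintype.card_fin]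
  refine ⟨?_, ?_⟩
  · rw [hceil, ENNReal.ofReal_div_of_pos hn, ENNReal.ofReal_add n.cast_nonneg zero_le_one,
      ENNReal.ofReal_natCast, ENNReal.ofReal_natCast, ENNReal.ofReal_one,
      ENNReal.div_le_iff (by simp) (by simp), mul_comm]
    simpa using hcover
  · rw [le_div_iff₀ hn]
    exact Int.le_ceil _
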